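/- arXiv:2104.00979 — 2 statements merged into one kernel-verified Lean document; each statement's English description precedes it below -/
import Mathlib

section
/- Let f : ℝ^d → ℝ be an α-strongly convex function (i.e., x ↦ f(x) − (α/2)‖x‖₂² is convex) that is also B-Lipschitz in the ℓ₂ norm, defined on a domain X containing the ℓ∞-ball of radius D centered at the origin. Then B/α ≥ D·√d / 4. -/
/-!
Strong convexity at the midpoint of `x` and `-x` gives `f 0 ≤ (f x + f (-x)) / 2 - α/2 ‖x‖²`,
while the Lipschitz bound gives `f (±x) - f 0 ≤ B ‖x‖`; hence `α ‖x‖ ≤ 2 B` whenever `±x ∈ X`.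
The corner `x = (D, …, D)` of the cube has `‖x‖ = D √d`.
-/

theorem EuclideanSpace.norm_toLp_const {ι : Type*} [Fintype ι] (c : ℝ) :
    ‖(WithLp.toLp 2 (fun _ : ι => c) : EuclideanSpace ℝ ι)‖ = |c| * √(Fintype.card ι) := by
  rw [EuclideanSpace.norm_eq]
  simp only [Finset.sum_const, Finset.card_univ, nsmul_eq_mul, Real.norm_eq_abs, sq_abs]
  rw [mul_comm, Real.sqrt_mul (sq_nonneg c), Real.sqrt_sq_eq_abs]

section StronglyConvexLipschitz

variable {E : Type*} [NormedAddCommGroup E] [NormedSpace ℝ E] {X : Set E} {f : E → ℝ}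
  {α B : ℝ}

theorem mul_sq_norm_le_of_convexOn_sub_sq_norm
    (hsc : ConvexOn ℝ X (fun x => f x - α / 2 * ‖x‖ ^ 2))
    (hlip : ∀ x ∈ X, ∀ y ∈ X, |f x - f y| ≤ B * ‖x - y‖) {x : E} (hx : x ∈ X) (hnx : -x ∈ X) :
    α * ‖x‖ ^ 2 ≤ 2 * B * ‖x‖ := by
  have hmid : (1 / 2 : ℝ) • x + (1 / 2 : ℝ) • -x = 0 := by simp
  have h0 : (0 : E) ∈ X := hmid ▸ hsc.1 hx hnx (by norm_num) (by norm_num) (by norm_num)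
  have hconv := hsc.2 hx hnx (by norm_num : (0 : ℝ) ≤ 1 / 2) (by norm_num : (0 : ℝ) ≤ 1 / 2)
    (by norm_num)
  simp only [hmid, norm_zero, norm_neg, smul_eq_mul] at hconv
  have hpos := (abs_le.mp (hlip x hx 0 h0)).2
  have hneg := (abs_le.mp (hlip (-x) hnx 0 h0)).2
  simp only [sub_zero, norm_neg] at hpos hneg
  linarith

theorem mul_norm_le_of_convexOn_sub_sq_norm (hB : 0 ≤ B)
    (hsc : ConvexOn ℝ X (fun x => f x - α / 2 * ‖x‖ ^ 2))
    (hlip : ∀ x ∈ X, ∀ y ∈ X, |f x - f y| ≤ B * ‖x - y‖) {x : E} (hx : x ∈ X) (hnx : -x ∈ X) :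
    α * ‖x‖ ≤ 2 * B := by
  rcases (norm_nonneg x).eq_or_lt with hx0 | hxpos
  · rw [← hx0]
    linarith
  · refine le_of_mul_le_mul_right ?_ hxpos
    linarith [mul_sq_norm_le_of_convexOn_sub_sq_norm hsc hlip hx hnx]

end StronglyConvexLipschitz

theorem strong_convexity_lipschitz_ratio_general
    (d : ℕ) (D α B : ℝ) (hD : 0 < D) (hα : 0 < α) (hB : 0 < B)
    (X : Set (EuclideanSpace ℝ (Fin d)))
    (hball : {x : EuclideanSpace ℝ (Fin d) | ∀ i, |x i| ≤ D} ⊆ X)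
    (f : EuclideanSpace ℝ (Fin d) → ℝ)
    (hsc : ConvexOn ℝ X (fun x => f x - α / 2 * ‖x‖ ^ 2))
    (hlip : ∀ x ∈ X, ∀ y ∈ X, |f x - f y| ≤ B * ‖x - y‖) :
    B / α ≥ D * Real.sqrt d / 4 := by
  set corner : EuclideanSpace ℝ (Fin d) := WithLp.toLp 2 (fun _ => D)
  have hcorner : corner ∈ X := hball fun _ => by simp [corner, abs_of_pos hD]
  have hneg_corner : -corner ∈ X := hball fun _ => by simp [corner, abs_of_pos hD]
  have hnorm : ‖corner‖ = D * √d := by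
    rw [EuclideanSpace.norm_toLp_const, Fintype.card_fin, abs_of_pos hD]
  have hbound := mul_norm_le_of_convexOn_sub_sq_norm hB.le hsc hlip hcorner hneg_corner
  rw [hnorm] at hbound
  have : 0 ≤ α * (D * √d) := by positivity
  rw [ge_iff_le, le_div_iff₀ hα]
  linarith

/-- If `f` is `α`-strongly convex (i.e. `x ↦ f x - (α/2)‖x‖²` is convex)
and `B`-Lipschitz in the ℓ₂ norm on a domain `X ⊆ ℝ^d` containing the ℓ∞-ball of radius `D`
centered at the origin, then `B/α ≥ D √d / 4`. -/
theorem strong_convexity_lipschitz_ratio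
    (d : ℕ) (hd : 0 < d) (D α B : ℝ) (hD : 0 < D) (hα : 0 < α) (hB : 0 < B)
    (X : Set (EuclideanSpace ℝ (Fin d)))
    (hball : {x : EuclideanSpace ℝ (Fin d) | ∀ i, |x i| ≤ D} ⊆ X)
    (f : EuclideanSpace ℝ (Fin d) → ℝ)
    (hsc : ConvexOn ℝ X (fun x => f x - α / 2 * ‖x‖ ^ 2))
    (hlip : ∀ x ∈ X, ∀ y ∈ X, |f x - f y| ≤ B * ‖x - y‖) :
    B / α ≥ D * Real.sqrt d / 4 :=
  strong_convexity_lipschitz_ratio_general d D α B hD hα hB X hball f hsc hlip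
end

section
/- Let a, b > 0, θ ∈ [0,1), δ > 0 with (1−θ)/(1+θ) ≥ 2δ. For ν ∈ {−1,1} define g_ν(y) = a·( ((1+2δν)/2)(θb|y+b| + ((1−θ)/4)(y+b)²) + ((1−2δν)/2)(θb|y−b| + ((1−θ)/4)(y−b)²) ) on [−b, b]. Then g_ν(y) = a( ((1−θ)/4)y² + ((1+3θ)/4)b² + δν(1+θ)by ), its minimum over [−b,b] is ab²((1+3θ)/4 − δ²(1+θ)²/(1−θ)), attained at y* = −2δν b(1+θ)/(1−θ), and min_{y∈[−b,b]}(g₁(y)+g₋₁(y)) − (min g₁ + min g₋₁) = 2ab²δ²(1+θ)²/(1−θ) ≥ 2ab²δ²/(1−θ). -/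
set_option maxHeartbeats 1000000 in
/-- For the strongly convex hard instance coordinate functions
`g_ν(y) = a( ((1+2δν)/2)(θb|y+b| + ((1−θ)/4)(y+b)²) + ((1−2δν)/2)(θb|y−b| + ((1−θ)/4)(y−b)²) )`
on `[−b,b]`, with `(1−θ)/(1+θ) ≥ 2δ`: the quadratic form identity holds on `[−b,b]`, the
minimum over `[−b,b]` is `ab²((1+3θ)/4 − δ²(1+θ)²/(1−θ))` attained at
`y* = −2δνb(1+θ)/(1−θ)`, and the discrepancy equals `2ab²δ²(1+θ)²/(1−θ) ≥ 2ab²δ²/(1−θ)`. -/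
theorem strongly_convex_coordinate_discrepancy
    (a b θ δ : ℝ) (ha : 0 < a) (hb : 0 < b) (hθ : θ ∈ Set.Ico (0 : ℝ) 1)
    (hδ : 0 < δ) (hδθ : 2 * δ ≤ (1 - θ) / (1 + θ))
    (g : ℝ → ℝ → ℝ)
    (hg : ∀ ν y, g ν y =
      a * ((1 + 2 * δ * ν) / 2 * (θ * b * |y + b| + (1 - θ) / 4 * (y + b) ^ 2)
         + (1 - 2 * δ * ν) / 2 * (θ * b * |y - b| + (1 - θ) / 4 * (y - b) ^ 2))) :
    (∀ ν ∈ ({-1, 1} : Set ℝ), ∀ y ∈ Set.Icc (-b) b,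
        g ν y = a * ((1 - θ) / 4 * y ^ 2 + (1 + 3 * θ) / 4 * b ^ 2
                  + δ * ν * (1 + θ) * b * y)) ∧
    (∀ ν ∈ ({-1, 1} : Set ℝ),
        IsLeast (g ν '' Set.Icc (-b) b)
          (a * b ^ 2 * ((1 + 3 * θ) / 4 - δ ^ 2 * (1 + θ) ^ 2 / (1 - θ))) ∧
        (-2 * δ * ν * b * (1 + θ) / (1 - θ)) ∈ Set.Icc (-b) b ∧
        g ν (-2 * δ * ν * b * (1 + θ) / (1 - θ))
          = a * b ^ 2 * ((1 + 3 * θ) / 4 - δ ^ 2 * (1 + θ) ^ 2 / (1 - θ))) ∧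
    (sInf ((fun y => g 1 y + g (-1) y) '' Set.Icc (-b) b)
        - (sInf (g 1 '' Set.Icc (-b) b) + sInf (g (-1) '' Set.Icc (-b) b))
      = 2 * a * b ^ 2 * δ ^ 2 * (1 + θ) ^ 2 / (1 - θ)) ∧
    2 * a * b ^ 2 * δ ^ 2 / (1 - θ)
      ≤ 2 * a * b ^ 2 * δ ^ 2 * (1 + θ) ^ 2 / (1 - θ) := by
  obtain ⟨hθ0, hθ1⟩ := hθ
  have h1θ : (0:ℝ) < 1 - θ := by linarith
  have h1θ' : (0:ℝ) < 1 + θ := by linarith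
  have h2 : 2 * δ * (1 + θ) ≤ 1 - θ := (le_div_iff₀ h1θ').mp hδθ
  have hkey : δ ^ 2 * (1 + θ) ^ 2 / (1 - θ) * (1 - θ) = δ ^ 2 * (1 + θ) ^ 2 :=
    div_mul_cancel₀ _ h1θ.ne'
  -- quadratic identity, valid for all ν
  have hquad : ∀ ν : ℝ, ∀ y ∈ Set.Icc (-b) b,
      g ν y = a * ((1 - θ) / 4 * y ^ 2 + (1 + 3 * θ) / 4 * b ^ 2
                  + δ * ν * (1 + θ) * b * y) := by
    intro ν y hy
    obtain ⟨hy1, hy2⟩ := hy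
    rw [hg, abs_of_nonneg (by linarith : (0:ℝ) ≤ y + b),
      abs_of_nonpos (by linarith : y - b ≤ 0)]
    ring
  have hmain : ∀ ν ∈ ({-1, 1} : Set ℝ),
      IsLeast (g ν '' Set.Icc (-b) b)
        (a * b ^ 2 * ((1 + 3 * θ) / 4 - δ ^ 2 * (1 + θ) ^ 2 / (1 - θ))) ∧
      (-2 * δ * ν * b * (1 + θ) / (1 - θ)) ∈ Set.Icc (-b) b ∧
      g ν (-2 * δ * ν * b * (1 + θ) / (1 - θ))
        = a * b ^ 2 * ((1 + 3 * θ) / 4 - δ ^ 2 * (1 + θ) ^ 2 / (1 - θ)) := by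
    intro ν hν
    simp only [Set.mem_insert_iff, Set.mem_singleton_iff] at hν
    have hν2 : ν ^ 2 = 1 := by rcases hν with rfl | rfl <;> norm_num
    have hmem : (-2 * δ * ν * b * (1 + θ) / (1 - θ)) ∈ Set.Icc (-b) b := by
      rcases hν with rfl | rfl <;>
        exact ⟨by rw [le_div_iff₀ h1θ]; nlinarith [mul_pos hb h1θ'],
               by rw [div_le_iff₀ h1θ]; nlinarith [mul_pos hb h1θ']⟩
    have hval : g ν (-2 * δ * ν * b * (1 + θ) / (1 - θ))
        = a * b ^ 2 * ((1 + 3 * θ) / 4 - δ ^ 2 * (1 + θ) ^ 2 / (1 - θ)) := by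
      rcases hν with rfl | rfl <;>
      · rw [hquad _ _ hmem]
        field_simp
        ring
    refine ⟨⟨⟨_, hmem, hval⟩, ?_⟩, hmem, hval⟩
    rintro x ⟨y, hy, rfl⟩
    rw [hquad _ y hy]
    have hkey' : a * b ^ 2 * (δ ^ 2 * (1 + θ) ^ 2 / (1 - θ)) * (1 - θ)
        = a * b ^ 2 * (δ ^ 2 * (1 + θ) ^ 2) := by
      field_simp
    have hν2' : a * b ^ 2 * δ ^ 2 * (1 + θ) ^ 2 * ν ^ 2
        = a * b ^ 2 * δ ^ 2 * (1 + θ) ^ 2 := by rw [hν2]; ring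
    nlinarith [mul_nonneg ha.le (sq_nonneg ((1 - θ) * y + 2 * δ * ν * b * (1 + θ))),
      hkey', hν2', h1θ]
  refine ⟨fun ν _ => hquad ν, hmain, ?_, ?_⟩
  · have h0mem : (0:ℝ) ∈ Set.Icc (-b) b := by constructor <;> linarith
    have hsum : IsLeast ((fun y => g 1 y + g (-1) y) '' Set.Icc (-b) b)
        (a * b ^ 2 * ((1 + 3 * θ) / 2)) := by
      constructor
      · exact ⟨0, h0mem, by
          show g 1 0 + g (-1) 0 = _
          rw [hquad 1 0 h0mem, hquad (-1) 0 h0mem]; ring⟩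
      · rintro x ⟨y, hy, rfl⟩
        show _ ≤ g 1 y + g (-1) y
        rw [hquad 1 y hy, hquad (-1) y hy]
        nlinarith [mul_nonneg ha.le (sq_nonneg y), h1θ]
    have h1 := (hmain 1 (by norm_num)).1
    have h2' := (hmain (-1) (by norm_num)).1
    rw [hsum.csInf_eq, h1.csInf_eq, h2'.csInf_eq]
    field_simp
    ring
  · have hpos : (0:ℝ) ≤ a * b ^ 2 * δ ^ 2 := by positivity
    have h3 : 2 * a * b ^ 2 * δ ^ 2 ≤ 2 * a * b ^ 2 * δ ^ 2 * (1 + θ) ^ 2 := by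
      nlinarith [mul_nonneg hpos hθ0, mul_nonneg hpos (sq_nonneg θ)]
    exact div_le_div_of_nonneg_right h3 h1θ.le
end
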